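/- arXiv:1204.0243 — 2 statements merged into one kernel-verified Lean document; each statement's English description precedes it below -/
import Mathlib

section
/- Let g₁, g₂ : Ω → 𝔻 be nowhere-holomorphic C² functions on an open set Ω ⊆ ℂ satisfying the compatibility condition (CP), and suppose the integrability conditions (Ge1) (equivalently (Ge2)) hold. Then the function F defined by (CP) satisfies F_z = −|F|²·[g₁(1 − |g₂|²) + g₂(1 − |g₁|²)] on Ω; equivalently, the function f := −2i·conj(F) satisfies f_z̄ = (i/2)|f|²·[conj(g₁)(1 − |g₂|²) + conj(g₂)(1 − |g₁|²)]. -/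
/-!
With `D = (1 - g₁ ḡ₂)(1 + |g₁|²)`, the quotient rule gives
`F_z = (((g₁)_z̄)_z D - (g₁)_z̄ D_z) / D²`. Condition (Ge1) expresses `((g₁)_z̄)_z` so that all
terms containing `(g₁)_z` cancel. What remains involves `conj (g₁)_z̄` and `conj (g₂)_z̄`, and
both are multiples of `conj F`: the first by the definition of `F`, the second by (CP). The
expression then collapses to `-|F|²[…]`. The identity for `f` is its conjugate, since
`f_z̄ = -2i conj (F_z)` and `|f|² = 4|F|²`.
-/

open Complex ComplexConjugate

/-- Wirtinger derivative `∂h/∂z = ½(∂h/∂u − i ∂h/∂v)` of a map `h : ℂ → ℂ`. -/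
noncomputable def wz (h : ℂ → ℂ) (z : ℂ) : ℂ :=
  (1 / 2) * (fderiv ℝ h z 1 - Complex.I * fderiv ℝ h z Complex.I)

/-- Wirtinger derivative `∂h/∂z̄ = ½(∂h/∂u + i ∂h/∂v)` of a map `h : ℂ → ℂ`. -/
noncomputable def wzb (h : ℂ → ℂ) (z : ℂ) : ℂ :=
  (1 / 2) * (fderiv ℝ h z 1 + Complex.I * fderiv ℝ h z Complex.I)

/-- Wirtinger derivative `∂x/∂z` of a real-valued map `x : ℂ → ℝ`. -/
noncomputable def wzR (x : ℂ → ℝ) (z : ℂ) : ℂ :=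
  (1 / 2) * (((fderiv ℝ x z 1 : ℝ) : ℂ) - Complex.I * ((fderiv ℝ x z Complex.I : ℝ) : ℂ))

/-- The function `F` appearing in the compatibility condition (CP). -/
noncomputable def Ffun (g₁ g₂ : ℂ → ℂ) (z : ℂ) : ℂ :=
  wzb g₁ z / ((1 - g₁ z * conj (g₂ z)) * (1 + (Complex.normSq (g₁ z) : ℂ)))

/-- The compatibility condition (CP) at a point `z`. -/
def CP (g₁ g₂ : ℂ → ℂ) (z : ℂ) : Prop :=
  Ffun g₁ g₂ z = wzb g₂ z / ((1 - conj (g₁ z) * g₂ z) * (1 + (Complex.normSq (g₂ z) : ℂ)))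

/-- The integrability condition (Ge1) at a point `z`. -/
def Ge1 (g₁ g₂ : ℂ → ℂ) (z : ℂ) : Prop :=
  0 = wz (wzb g₁) z
      + (conj (g₂ z) / (1 - g₁ z * conj (g₂ z))
          - conj (g₁ z) / (1 + (Complex.normSq (g₁ z) : ℂ))) * wz g₁ z * wzb g₁ z
      + ((g₁ z + g₂ z) / ((1 - conj (g₁ z) * g₂ z) * (1 + (Complex.normSq (g₁ z) : ℂ))))
          * (Complex.normSq (wzb g₁ z) : ℂ)

/-- The integrability condition (Ge2) at a point `z`. -/
def Ge2 (g₁ g₂ : ℂ → ℂ) (z : ℂ) : Prop :=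
  0 = wz (wzb g₂) z
      + (conj (g₁ z) / (1 - conj (g₁ z) * g₂ z)
          - conj (g₂ z) / (1 + (Complex.normSq (g₂ z) : ℂ))) * wz g₂ z * wzb g₂ z
      + ((g₁ z + g₂ z) / ((1 - g₁ z * conj (g₂ z)) * (1 + (Complex.normSq (g₂ z) : ℂ))))
          * (Complex.normSq (wzb g₂ z) : ℂ)

/-- The function `f := −2i·conj(F)`. -/
noncomputable def ffun (g₁ g₂ : ℂ → ℂ) (z : ℂ) : ℂ :=
  -2 * Complex.I * conj (Ffun g₁ g₂ z)

section Wirtinger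

variable {f g : ℂ → ℂ} {z : ℂ}

lemma wz_const_add (c : ℂ) : wz (fun w => c + f w) z = wz f z := by
  simp only [wz, fderiv_const_add]

lemma wz_const_sub (c : ℂ) : wz (fun w => c - f w) z = -wz f z := by
  simp only [wz, fderiv_const_sub, neg_apply]; ring

lemma wzb_const_mul (c : ℂ) (hf : DifferentiableAt ℝ f z) :
    wzb (fun w => c * f w) z = c * wzb f z := by
  simp only [wzb, fderiv_const_mul hf, smul_apply, smul_eq_mul]; ring

lemma wz_mul (hf : DifferentiableAt ℝ f z) (hg : DifferentiableAt ℝ g z) :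
    wz (fun w => f w * g w) z = wz f z * g z + f z * wz g z := by
  simp only [wz, fderiv_fun_mul hf hg, add_apply, smul_apply, smul_eq_mul]; ring

lemma HasDerivAt.wz_comp {φ : ℂ → ℂ} {φ' : ℂ} (hφ : HasDerivAt φ φ' (f z))
    (hf : DifferentiableAt ℝ f z) : wz (fun w => φ (f w)) z = φ' * wz f z := by
  have h := (hφ.hasFDerivAt.restrictScalars ℝ).comp z hf.hasFDerivAt
  change wz (φ ∘ f) z = _
  simp only [wz, h.fderiv, ContinuousLinearMap.comp_apply, ContinuousLinearMap.coe_restrictScalars',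
    ContinuousLinearMap.toSpanSingleton_apply, smul_eq_mul]
  ring

lemma wz_div (hf : DifferentiableAt ℝ f z) (hg : DifferentiableAt ℝ g z) (hgz : g z ≠ 0) :
    wz (fun w => f w / g w) z = (wz f z * g z - f z * wz g z) / g z ^ 2 := by
  simp only [div_eq_mul_inv]
  rw [wz_mul hf (hg.fun_inv hgz), (hasDerivAt_inv hgz).wz_comp hg]
  field_simp
  ring

lemma fderiv_conj (v : ℂ) : fderiv ℝ (fun w => conj (f w)) z v = conj (fderiv ℝ f z v) :=
  congrArg (· v) (fderiv_star (𝕜 := ℝ) (f := f) (x := z))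

lemma DifferentiableAt.conj (hf : DifferentiableAt ℝ f z) :
    DifferentiableAt ℝ (fun w => conj (f w)) z :=
  hf.star

lemma wz_conj : wz (fun w => conj (f w)) z = conj (wzb f z) := by
  simp only [wz, wzb, fderiv_conj, map_mul, map_add, conj_I, map_div₀, map_one, map_ofNat]
  ring

lemma wzb_conj : wzb (fun w => conj (f w)) z = conj (wz f z) := by
  simp only [wz, wzb, fderiv_conj, map_mul, map_sub, conj_I, map_div₀, map_one, map_ofNat]
  ring

lemma DifferentiableAt.ofReal_normSq (hf : DifferentiableAt ℝ f z) :
    DifferentiableAt ℝ (fun w => (normSq (f w) : ℂ)) z := by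
  simpa only [mul_conj] using hf.fun_mul hf.conj

lemma wz_normSq (hf : DifferentiableAt ℝ f z) :
    wz (fun w => (normSq (f w) : ℂ)) z = wz f z * conj (f z) + f z * conj (wzb f z) := by
  simp only [← mul_conj]
  rw [wz_mul hf hf.conj, wz_conj]

lemma ContDiffAt.differentiableAt_wzb (hf : ContDiffAt ℝ 2 f z) :
    DifferentiableAt ℝ (wzb f) z := by
  have hf' : DifferentiableAt ℝ (fderiv ℝ f) z :=
    (hf.fderiv_right (by norm_num)).differentiableAt one_ne_zero
  unfold wzb
  fun_prop

end Wirtinger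

lemma one_sub_mul_conj_ne_zero {p q : ℂ} (hp : ‖p‖ < 1) (hq : ‖q‖ < 1) : 1 - p * conj q ≠ 0 := by
  refine sub_ne_zero.mpr fun h => ?_
  have : ‖p * conj q‖ < 1 := by
    rw [norm_mul, norm_conj]
    exact mul_lt_one_of_nonneg_of_lt_one_left (norm_nonneg p) hp hq.le
  simp [← h] at this

lemma one_add_normSq_ne_zero (p : ℂ) : 1 + (normSq p : ℂ) ≠ 0 := by
  exact_mod_cast (add_pos_of_pos_of_nonneg one_pos (normSq_nonneg p)).ne'

lemma one_sub_conj_mul_ne_zero {p q : ℂ} (hp : ‖p‖ < 1) (hq : ‖q‖ < 1) : 1 - conj p * q ≠ 0 :=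
  mul_comm q _ ▸ one_sub_mul_conj_ne_zero hq hp

/-- The quotient rule for `F_z` (`wz_Ffun`) after (Ge1) and (CP): `p, q, a, b, s` stand for
`g₁, g₂, (g₁)_z̄, (g₁)_z, ((g₁)_z̄)_z`, primes for complex conjugates, and `c` for `conj F`. -/
lemma wz_Ffun_identity {K : Type*} [Field K] {p q p' q' a b c s : K}
    (hB : 1 - p * q' ≠ 0) (hC : 1 + p * p' ≠ 0)
    (hs : s = -(q' / (1 - p * q') - p' / (1 + p * p')) * b * a - (p + q) * a * c) :
    (s * ((1 - p * q') * (1 + p * p'))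
        - a * (-(b * q' + p * (c * ((1 - p * q') * (1 + q * q')))) * (1 + p * p')
          + (1 - p * q') * (b * p' + p * (c * ((1 - p' * q) * (1 + p * p'))))))
      / ((1 - p * q') * (1 + p * p')) ^ 2
      = -(a / ((1 - p * q') * (1 + p * p')) * c) * (p * (1 - q * q') + q * (1 - p * p')) := by
  have hB' : 1 - q' * p ≠ 0 := by rwa [mul_comm]
  subst hs
  field_simp
  ring

section Ffun

variable {g₁ g₂ : ℂ → ℂ} {z : ℂ}

lemma differentiableAt_Ffun_denom (hg₁ : DifferentiableAt ℝ g₁ z) (hg₂ : DifferentiableAt ℝ g₂ z) :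
    DifferentiableAt ℝ (fun w => (1 - g₁ w * conj (g₂ w)) * (1 + (normSq (g₁ w) : ℂ))) z :=
  ((hg₁.fun_mul hg₂.conj).const_sub 1).fun_mul (hg₁.ofReal_normSq.const_add 1)

lemma Ffun_denom_ne_zero (hd₁ : ‖g₁ z‖ < 1) (hd₂ : ‖g₂ z‖ < 1) :
    (1 - g₁ z * conj (g₂ z)) * (1 + (normSq (g₁ z) : ℂ)) ≠ 0 :=
  mul_ne_zero (one_sub_mul_conj_ne_zero hd₁ hd₂) (one_add_normSq_ne_zero (g₁ z))

lemma differentiableAt_Ffun (hg₁ : ContDiffAt ℝ 2 g₁ z) (hg₂ : DifferentiableAt ℝ g₂ z)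
    (hd₁ : ‖g₁ z‖ < 1) (hd₂ : ‖g₂ z‖ < 1) : DifferentiableAt ℝ (Ffun g₁ g₂) z := by
  unfold Ffun
  simp only [div_eq_mul_inv]
  exact hg₁.differentiableAt_wzb.fun_mul
    ((differentiableAt_Ffun_denom (hg₁.differentiableAt (by norm_num)) hg₂).fun_inv
      (Ffun_denom_ne_zero hd₁ hd₂))

lemma wz_Ffun (hg₁ : ContDiffAt ℝ 2 g₁ z) (hg₂ : DifferentiableAt ℝ g₂ z)
    (hd₁ : ‖g₁ z‖ < 1) (hd₂ : ‖g₂ z‖ < 1) :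
    wz (Ffun g₁ g₂) z
      = (wz (wzb g₁) z * ((1 - g₁ z * conj (g₂ z)) * (1 + normSq (g₁ z)))
          - wzb g₁ z * (-(wz g₁ z * conj (g₂ z) + g₁ z * conj (wzb g₂ z)) * (1 + normSq (g₁ z))
            + (1 - g₁ z * conj (g₂ z)) * (wz g₁ z * conj (g₁ z) + g₁ z * conj (wzb g₁ z))))
        / ((1 - g₁ z * conj (g₂ z)) * (1 + normSq (g₁ z))) ^ 2 := by
  have hg₁' : DifferentiableAt ℝ g₁ z := hg₁.differentiableAt (by norm_num)
  unfold Ffun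
  rw [wz_div hg₁.differentiableAt_wzb (differentiableAt_Ffun_denom hg₁' hg₂)
      (Ffun_denom_ne_zero hd₁ hd₂),
    wz_mul ((hg₁'.fun_mul hg₂.conj).const_sub 1) (hg₁'.ofReal_normSq.const_add 1),
    wz_const_sub, wz_const_add, wz_mul hg₁' hg₂.conj, wz_conj, wz_normSq hg₁']

lemma conj_wzb_eq (hd₁ : ‖g₁ z‖ < 1) (hd₂ : ‖g₂ z‖ < 1) :
    conj (wzb g₁ z)
      = conj (Ffun g₁ g₂ z) * ((1 - conj (g₁ z) * g₂ z) * (1 + (normSq (g₁ z) : ℂ))) := by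
  rw [← div_eq_iff (mul_ne_zero (one_sub_conj_mul_ne_zero hd₁ hd₂) (one_add_normSq_ne_zero _))]
  simp [Ffun]

lemma CP.conj_wzb_eq (hCP : CP g₁ g₂ z) (hd₁ : ‖g₁ z‖ < 1) (hd₂ : ‖g₂ z‖ < 1) :
    conj (wzb g₂ z)
      = conj (Ffun g₁ g₂ z) * ((1 - g₁ z * conj (g₂ z)) * (1 + (normSq (g₂ z) : ℂ))) := by
  rw [← div_eq_iff (mul_ne_zero (one_sub_mul_conj_ne_zero hd₁ hd₂) (one_add_normSq_ne_zero _)),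
    hCP]
  simp

lemma Ge1.wz_wzb_eq (hGe1 : Ge1 g₁ g₂ z) (hd₁ : ‖g₁ z‖ < 1) (hd₂ : ‖g₂ z‖ < 1) :
    wz (wzb g₁) z = -(conj (g₂ z) / (1 - g₁ z * conj (g₂ z))
        - conj (g₁ z) / (1 + (normSq (g₁ z) : ℂ))) * wz g₁ z * wzb g₁ z
      - (g₁ z + g₂ z) * wzb g₁ z * conj (Ffun g₁ g₂ z) := by
  have hE : (1 - conj (g₁ z) * g₂ z) * (1 + (normSq (g₁ z) : ℂ)) ≠ 0 :=
    mul_ne_zero (one_sub_conj_mul_ne_zero hd₁ hd₂) (one_add_normSq_ne_zero (g₁ z))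
  rw [Ge1, ← mul_conj (wzb g₁ z), conj_wzb_eq hd₁ hd₂] at hGe1
  have hcancel : (g₁ z + g₂ z) / ((1 - conj (g₁ z) * g₂ z) * (1 + (normSq (g₁ z) : ℂ)))
      * (wzb g₁ z * (conj (Ffun g₁ g₂ z) * ((1 - conj (g₁ z) * g₂ z) * (1 + (normSq (g₁ z) : ℂ)))))
      = (g₁ z + g₂ z) * wzb g₁ z * conj (Ffun g₁ g₂ z) := by
    rw [div_mul_eq_mul_div, div_eq_iff hE]
    ring
  linear_combination -hGe1 - hcancel

theorem wz_Ffun_eq (hg₁ : ContDiffAt ℝ 2 g₁ z) (hg₂ : DifferentiableAt ℝ g₂ z)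
    (hd₁ : ‖g₁ z‖ < 1) (hd₂ : ‖g₂ z‖ < 1) (hCP : CP g₁ g₂ z) (hGe1 : Ge1 g₁ g₂ z) :
    wz (Ffun g₁ g₂) z = -(normSq (Ffun g₁ g₂ z) : ℂ)
      * (g₁ z * (1 - (normSq (g₂ z) : ℂ)) + g₂ z * (1 - (normSq (g₁ z) : ℂ))) := by
  have hs := hGe1.wz_wzb_eq hd₁ hd₂
  have hC := one_add_normSq_ne_zero (g₁ z)
  rw [wz_Ffun hg₁ hg₂ hd₁ hd₂, conj_wzb_eq hd₁ hd₂, hCP.conj_wzb_eq hd₁ hd₂,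
    ← mul_conj (Ffun g₁ g₂ z)]
  -- protects `conj F` from the unfolding of `F` that follows
  set c := conj (Ffun g₁ g₂ z)
  rw [Ffun]
  simp only [← mul_conj] at hs hC ⊢
  exact wz_Ffun_identity (one_sub_mul_conj_ne_zero hd₁ hd₂) hC hs

lemma wzb_ffun (hF : DifferentiableAt ℝ (Ffun g₁ g₂) z) :
    wzb (ffun g₁ g₂) z = -2 * I * conj (wz (Ffun g₁ g₂) z) := by
  rw [← wzb_conj]
  exact wzb_const_mul _ hF.conj

lemma normSq_ffun : normSq (ffun g₁ g₂ z) = 4 * normSq (Ffun g₁ g₂ z) := by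
  rw [ffun, normSq_mul, normSq_mul, normSq_conj, normSq_I, normSq_neg]
  norm_num

end Ffun

theorem F_z_eq_general
    (Ω : Set ℂ) (hΩ : IsOpen Ω) (g₁ g₂ : ℂ → ℂ)
    (hg₁ : ContDiffOn ℝ 2 g₁ Ω) (hg₂ : ContDiffOn ℝ 2 g₂ Ω)
    (hd₁ : ∀ z ∈ Ω, ‖g₁ z‖ < 1) (hd₂ : ∀ z ∈ Ω, ‖g₂ z‖ < 1)
    (hCP : ∀ z ∈ Ω, CP g₁ g₂ z)
    (hGe1 : ∀ z ∈ Ω, Ge1 g₁ g₂ z) :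
    ∀ z ∈ Ω,
      (wz (Ffun g₁ g₂) z
        = -(Complex.normSq (Ffun g₁ g₂ z) : ℂ)
            * (g₁ z * (1 - (Complex.normSq (g₂ z) : ℂ))
              + g₂ z * (1 - (Complex.normSq (g₁ z) : ℂ))))
      ∧ (wzb (ffun g₁ g₂) z
        = (Complex.I / 2) * (Complex.normSq (ffun g₁ g₂ z) : ℂ)
            * (conj (g₁ z) * (1 - (Complex.normSq (g₂ z) : ℂ))
              + conj (g₂ z) * (1 - (Complex.normSq (g₁ z) : ℂ)))) := by
  intro z hz
  have hg₁z : ContDiffAt ℝ 2 g₁ z := hg₁.contDiffAt (hΩ.mem_nhds hz)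
  have hg₂z : DifferentiableAt ℝ g₂ z :=
    (hg₂.contDiffAt (hΩ.mem_nhds hz)).differentiableAt (by norm_num)
  have hFz := wz_Ffun_eq hg₁z hg₂z (hd₁ z hz) (hd₂ z hz) (hCP z hz) (hGe1 z hz)
  refine ⟨hFz, ?_⟩
  rw [wzb_ffun (differentiableAt_Ffun hg₁z hg₂z (hd₁ z hz) (hd₂ z hz)), hFz, normSq_ffun]
  simp only [map_mul, map_neg, map_sub, map_add, map_one, conj_ofReal]
  push_cast
  ring

/-- **(Step B, first identity).** Under (CP) and (Ge1)/(Ge2), the function `F` satisfies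
`F_z = −|F|²·[g₁(1 − |g₂|²) + g₂(1 − |g₁|²)]`; equivalently, `f := −2i·conj(F)` satisfies
`f_z̄ = (i/2)|f|²·[conj(g₁)(1 − |g₂|²) + conj(g₂)(1 − |g₁|²)]`. -/
theorem F_z_eq
    (Ω : Set ℂ) (hΩ : IsOpen Ω) (g₁ g₂ : ℂ → ℂ)
    (hg₁ : ContDiffOn ℝ 2 g₁ Ω) (hg₂ : ContDiffOn ℝ 2 g₂ Ω)
    (hd₁ : ∀ z ∈ Ω, ‖g₁ z‖ < 1) (hd₂ : ∀ z ∈ Ω, ‖g₂ z‖ < 1)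
    (hnh₁ : ∀ z ∈ Ω, wzb g₁ z ≠ 0) (hnh₂ : ∀ z ∈ Ω, wzb g₂ z ≠ 0)
    (hCP : ∀ z ∈ Ω, CP g₁ g₂ z)
    (hGe1 : ∀ z ∈ Ω, Ge1 g₁ g₂ z) :
    ∀ z ∈ Ω,
      (wz (Ffun g₁ g₂) z
        = -(Complex.normSq (Ffun g₁ g₂ z) : ℂ)
            * (g₁ z * (1 - (Complex.normSq (g₂ z) : ℂ))
              + g₂ z * (1 - (Complex.normSq (g₁ z) : ℂ))))
      ∧ (wzb (ffun g₁ g₂) z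
        = (Complex.I / 2) * (Complex.normSq (ffun g₁ g₂ z) : ℂ)
            * (conj (g₁ z) * (1 - (Complex.normSq (g₂ z) : ℂ))
              + conj (g₂ z) * (1 - (Complex.normSq (g₁ z) : ℂ)))) :=
  F_z_eq_general Ω hΩ g₁ g₂ hg₁ hg₂ hd₁ hd₂ hCP hGe1
end

section
/- The map X : ℝ² → ℝ³ defined by X(u, v) := (−2·arctan(tanh u), 2v, −ln(cosh(2u))) satisfies X_z = (2·conj(G)_z/(|G|⁴ − 1))·(1 − G², i(1 + G²), 2G) for G(u + iv) = tanh u; moreover, for all (u, v) ∈ ℝ², its third coordinate equals the downward grim reaper height of its first coordinate: −ln(cosh(2u)) = ln(cos(2·arctan(tanh u))). Hence X parametrizes the graph x₃ = ln(cos x₁) over (−π/2, π/2) × ℝ. -/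
/-!
Since `G = tanh u` is real and depends on `u` only, `conj G = G`, `G_z = (1 - G²)/2` and
`|G|⁴ - 1 = -(1 - G²)(1 + G²)`, so the prefactor of `φ` is `-1/(1 + G²)` and, with `t = tanh u`,
`φ = (-(1 - t²)/(1 + t²), -i, -2t/(1 + t²))`. For a function of `u` alone, `∂/∂z` is half of
`d/du`; here `d/du arctan (tanh u) = (1 - t²)/(1 + t²)` and
`d/du log (cosh 2u) = 2 tanh 2u = 4t/(1 + t²)`, while `∂(2v)/∂z = -i`. The height identity is
`cos (2 arctan t) = (1 - t²)/(1 + t²) = 1 / cosh 2u`.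
-/

open Complex ComplexConjugate

/-- The translator equation (Gauss) for `G : Ω → 𝔻`:
`G_{zz̄} + 2(conj(G)|G|²/(1 − |G|⁴))·G_z·G_z̄ + 2(G/(1 − |G|⁴))·|G_z̄|² = 0`. -/
def GaussEq (G : ℂ → ℂ) (z : ℂ) : Prop :=
  wz (wzb G) z
    + 2 * (conj (G z) * (Complex.normSq (G z) : ℂ)
        / (1 - (Complex.normSq (G z) : ℂ) ^ 2)) * wz G z * wzb G z
    + 2 * (G z / (1 - (Complex.normSq (G z) : ℂ) ^ 2)) * (Complex.normSq (wzb G z) : ℂ) = 0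

/-- The null curve `φ = (2·conj(G)_z/(|G|⁴ − 1))·(1 − G², i(1 + G²), 2G)` in `ℂ³`. -/
noncomputable def phi3 (G : ℂ → ℂ) (z : ℂ) : Fin 3 → ℂ :=
  ![(2 * wz (fun w => conj (G w)) z / ((Complex.normSq (G z) : ℂ) ^ 2 - 1)) * (1 - (G z) ^ 2),
    (2 * wz (fun w => conj (G w)) z / ((Complex.normSq (G z) : ℂ) ^ 2 - 1))
      * (Complex.I * (1 + (G z) ^ 2)),
    (2 * wz (fun w => conj (G w)) z / ((Complex.normSq (G z) : ℂ) ^ 2 - 1)) * (2 * G z)]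

namespace Real

theorem one_sub_tanh_sq (x : ℝ) : 1 - tanh x ^ 2 = (cosh x ^ 2)⁻¹ := by
  have hc : cosh x ≠ 0 := (cosh_pos x).ne'
  rw [tanh_eq_sinh_div_cosh]
  field_simp
  linear_combination cosh_sq_sub_sinh_sq x

theorem hasDerivAt_tanh (x : ℝ) : HasDerivAt tanh (1 - tanh x ^ 2) x := by
  have h := (hasDerivAt_sinh x).div (hasDerivAt_cosh x) (cosh_pos x).ne'
  rwa [show sinh / cosh = tanh from funext fun y => (tanh_eq_sinh_div_cosh y).symm,
    ← sq, ← sq, cosh_sq_sub_sinh_sq, one_div, ← one_sub_tanh_sq] at h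

theorem cosh_two_mul_eq_tanh (x : ℝ) :
    cosh (2 * x) = (1 + tanh x ^ 2) / (1 - tanh x ^ 2) := by
  have hc : cosh x ≠ 0 := (cosh_pos x).ne'
  rw [one_sub_tanh_sq, cosh_two_mul, tanh_eq_sinh_div_cosh]
  field_simp

theorem tanh_two_mul (x : ℝ) : tanh (2 * x) = 2 * tanh x / (1 + tanh x ^ 2) := by
  have hc : cosh x ≠ 0 := (cosh_pos x).ne'
  rw [tanh_eq_sinh_div_cosh, tanh_eq_sinh_div_cosh, cosh_two_mul, sinh_two_mul, div_pow]
  field_simp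

theorem cos_two_mul_arctan (x : ℝ) : cos (2 * arctan x) = (1 - x ^ 2) / (1 + x ^ 2) := by
  rw [cos_two_mul, cos_sq_arctan]
  field_simp
  ring

theorem cos_two_mul_arctan_tanh (x : ℝ) : cos (2 * arctan (tanh x)) = (cosh (2 * x))⁻¹ := by
  rw [cos_two_mul_arctan, cosh_two_mul_eq_tanh, inv_div]

theorem arctan_mem_Ioo_of_mem_Ioo {x : ℝ} (hx : x ∈ Set.Ioo (-1) 1) :
    arctan x ∈ Set.Ioo (-(π / 4)) (π / 4) := by
  rw [← arctan_one, ← arctan_neg]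
  exact ⟨arctan_strictMono hx.1, arctan_strictMono hx.2⟩

theorem hasDerivAt_arctan_tanh (x : ℝ) :
    HasDerivAt (fun u => arctan (tanh u)) ((1 - tanh x ^ 2) / (1 + tanh x ^ 2)) x :=
  ((hasDerivAt_arctan (tanh x)).comp x (hasDerivAt_tanh x)).congr_deriv (by ring)

theorem hasDerivAt_log_cosh_two_mul (x : ℝ) :
    HasDerivAt (fun u => log (cosh (2 * u))) (2 * tanh (2 * x)) x := by
  have h := ((hasDerivAt_cosh (2 * x)).comp x ((hasDerivAt_id x).const_mul 2)).log
    (cosh_pos _).ne'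
  exact h.congr_deriv (by rw [tanh_eq_sinh_div_cosh, Function.comp_apply]; ring)

end Real

theorem wzR_comp_re {f : ℝ → ℝ} {f' : ℝ} {z : ℂ} (hf : HasDerivAt f f' z.re) :
    wzR (fun w => f w.re) z = f' / 2 := by
  have h : HasFDerivAt (fun w : ℂ => f w.re) (f' • reCLM) z :=
    hf.comp_hasFDerivAt z reCLM.hasFDerivAt
  simp [wzR, h.fderiv, div_eq_mul_inv, mul_comm]

theorem wz_ofReal_comp_re {f : ℝ → ℝ} {f' : ℝ} {z : ℂ} (hf : HasDerivAt f f' z.re) :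
    wz (fun w => (f w.re : ℂ)) z = f' / 2 := by
  have h : HasFDerivAt (fun w : ℂ => (f w.re : ℂ)) (ofRealCLM.comp (f' • reCLM)) z :=
    ofRealCLM.hasFDerivAt.comp z (hf.comp_hasFDerivAt z reCLM.hasFDerivAt)
  simp [wz, h.fderiv, div_eq_mul_inv, mul_comm]

theorem wzR_const_mul_im (c : ℝ) (z : ℂ) : wzR (fun w => c * w.im) z = -(c / 2 * I) := by
  have h : HasFDerivAt (fun w : ℂ => c * w.im) (c • imCLM) z := imCLM.hasFDerivAt.const_smul c
  simp [wzR, h.fderiv, div_eq_mul_inv, mul_comm, mul_assoc]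

theorem phi3_tanh_re (z : ℂ) :
    phi3 (fun w => (Real.tanh w.re : ℂ)) z =
      ![-(1 - (Real.tanh z.re : ℂ) ^ 2) / (1 + (Real.tanh z.re : ℂ) ^ 2), -I,
        -(2 * (Real.tanh z.re : ℂ)) / (1 + (Real.tanh z.re : ℂ) ^ 2)] := by
  have hGz :
      wz (fun w => conj (Real.tanh w.re : ℂ)) z = ((1 - Real.tanh z.re ^ 2 : ℝ) : ℂ) / 2 := by
    simp only [conj_ofReal]
    exact wz_ofReal_comp_re (Real.hasDerivAt_tanh z.re)
  have ht1 : ((1 - Real.tanh z.re ^ 2 : ℝ) : ℂ) ≠ 0 :=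
    ofReal_ne_zero.2 (sub_pos.2 (Real.tanh_sq_lt_one z.re)).ne'
  simp only [phi3, hGz, normSq_ofReal]
  generalize Real.tanh z.re = t at *
  have ht2 : (1 + t ^ 2 : ℂ) ≠ 0 := by
    exact_mod_cast (by positivity : (0 : ℝ) < 1 + t ^ 2).ne'
  have hpre :
      2 * (((1 - t ^ 2 : ℝ) : ℂ) / 2) / (((t * t : ℝ) : ℂ) ^ 2 - 1) = -1 / (1 + t ^ 2) := by
    rw [show ((t * t : ℝ) : ℂ) ^ 2 - 1 = -((1 - t ^ 2 : ℝ) * (1 + t ^ 2)) by push_cast; ring]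
    field_simp
  rw [hpre]
  ext k
  fin_cases k <;>
    simp only [Fin.zero_eta, Fin.mk_one, Fin.reduceFinMk, Matrix.cons_val_zero, Matrix.cons_val_one,
      Matrix.cons_val]
  · ring
  · field_simp
  · ring

theorem wzR_grimReaper (z : ℂ) (k : Fin 3) :
    wzR (fun w => (![-2 * Real.arctan (Real.tanh w.re), 2 * w.im,
        -Real.log (Real.cosh (2 * w.re))] : Fin 3 → ℝ) k) z
      = phi3 (fun w => (Real.tanh w.re : ℂ)) z k := by
  have ht : (1 + Real.tanh z.re ^ 2 : ℂ) ≠ 0 := by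
    exact_mod_cast (by positivity : (0 : ℝ) < 1 + Real.tanh z.re ^ 2).ne'
  rw [phi3_tanh_re]
  fin_cases k
  · simp only [Fin.zero_eta, Matrix.cons_val_zero]
    rw [wzR_comp_re ((Real.hasDerivAt_arctan_tanh z.re).const_mul (-2))]
    push_cast
    field_simp
  · simp only [Fin.mk_one, Matrix.cons_val_one, Matrix.cons_val_zero]
    rw [wzR_const_mul_im]
    push_cast
    ring
  · simp only [Fin.reduceFinMk, Matrix.cons_val]
    rw [wzR_comp_re (f := fun u => -Real.log (Real.cosh (2 * u)))
      (Real.hasDerivAt_log_cosh_two_mul z.re).neg, Real.tanh_two_mul]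
    push_cast
    field_simp

open Real in
/-- **(Example: the downward grim reaper cylinder).** The map
`X(u, v) = (−2 arctan(tanh u), 2v, −ln(cosh 2u))` satisfies `X_z = φ` for
`G(u + iv) = tanh u`; moreover `−ln(cosh 2u) = ln(cos(2 arctan(tanh u)))`, so `X`
parametrizes the graph `x₃ = ln(cos x₁)` over `(−π/2, π/2) × ℝ`. -/
theorem grim_reaper_cylinder :
    (∀ z : ℂ, ∀ k : Fin 3,
      wzR (fun w =>
          (![-2 * Real.arctan (Real.tanh w.re),
             2 * w.im,
             -Real.log (Real.cosh (2 * w.re))] : Fin 3 → ℝ) k) z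
        = phi3 (fun w => ((Real.tanh w.re : ℝ) : ℂ)) z k)
    ∧ (∀ u : ℝ,
        -Real.log (Real.cosh (2 * u)) = Real.log (Real.cos (2 * Real.arctan (Real.tanh u))))
    ∧ (∀ u : ℝ, -2 * Real.arctan (Real.tanh u) ∈ Set.Ioo (-(π / 2)) (π / 2))
    ∧ (∀ u : ℝ,
        -Real.log (Real.cosh (2 * u))
          = Real.log (Real.cos (-2 * Real.arctan (Real.tanh u)))) := by
  refine ⟨wzR_grimReaper, fun u => ?_, fun u => ?_, fun u => ?_⟩
  · rw [Real.cos_two_mul_arctan_tanh, Real.log_inv]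
  · have h := Real.arctan_mem_Ioo_of_mem_Ioo ⟨Real.neg_one_lt_tanh u, Real.tanh_lt_one u⟩
    constructor <;> linarith [h.1, h.2]
  · rw [neg_mul, Real.cos_neg, Real.cos_two_mul_arctan_tanh, Real.log_inv]
end
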